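/- There exists a constant c such that for every binary string u: |C(u | C(u)) − K(u | C(u))| ≤ c. That is, C(u|C(u)) = K(u|C(u)) + O(1). -/

import Mathlib

/-- Binary strings. -/
abbrev BinStr := List Bool

/-- Standard encoding of a binary string as a natural number. -/
def enc (a : BinStr) : ℕ := Encodable.encode a

/-- A (conditional) machine: it takes a program (a binary string) and a condition
(a natural number, which encodes the conditioning data: a number, a string via `enc`,
or a tuple combined with the standard pairing `Nat.pair`) and possibly outputs a
natural number (encoding the result in the same way). -/
abbrev Machine := BinStr → ℕ →. ℕ

/-- Conditional Kolmogorov complexity of `x` given condition `y`, with respect to the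
machine `U`: the minimal length of a program `p` such that `U p y = x`. -/
noncomputable def cplx (U : Machine) (x y : ℕ) : ℕ :=
  sInf {n | ∃ p : BinStr, p.length = n ∧ x ∈ U p y}

/-- Unconditional Kolmogorov complexity: conditional complexity with the trivial
condition `0`. -/
noncomputable def cplx0 (U : Machine) (x : ℕ) : ℕ := cplx U x 0

/-- `U` is an optimal universal machine for plain complexity: it is partial computable
and simulates every partial computable machine with at most a constant overhead in
program length. -/
def IsOptimal (U : Machine) : Prop :=
  Partrec₂ U ∧
    ∀ V : Machine, Partrec₂ V →
      ∃ c : ℕ, ∀ (p : BinStr) (y x : ℕ), x ∈ V p y →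
        ∃ q : BinStr, q.length ≤ p.length + c ∧ x ∈ U q y

/-- A machine is prefix-free if, for every condition, the set of its halting programs
is prefix-free: no halting program is a proper prefix of another halting program. -/
def PrefixFreeMachine (M : Machine) : Prop :=
  ∀ (y : ℕ) (p q : BinStr), p <+: q → (M p y).Dom → (M q y).Dom → p = q

/-- `U` is an optimal universal prefix-free machine: it is partial computable,
prefix-free, and simulates every partial computable prefix-free machine with at most
a constant overhead in program length. -/
def IsPrefixOptimal (U : Machine) : Prop :=
  Partrec₂ U ∧ PrefixFreeMachine U ∧
    ∀ V : Machine, Partrec₂ V → PrefixFreeMachine V →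
      ∃ c : ℕ, ∀ (p : BinStr) (y x : ℕ), x ∈ V p y →
        ∃ q : BinStr, q.length ≤ p.length + c ∧ x ∈ U q y

/-!
Write `n = C(u)`, `m = C(u | n)` and `k = K(u | n)`. A prefix-free machine is in particular a
machine, so `m ≤ k + O(1)`, and ignoring the condition gives `m ≤ n + O(1)`. Conversely:

* `n ≤ m + O(1)`: a program for `u` given `n`, of length `m ≤ n`, together with `n - m` written
  in half-unary (`(n - m) / 2` ones, a zero and a parity bit) describes `u` without condition, so
  `n ≤ (n + m) / 2 + O(1)`;
* `k ≤ n + O(1)`: given the condition `y`, the programs of length exactly `y + c` form a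
  prefix-free set, and a conditional program of length `≤ n + c - 1` can be padded to length
  `n + c` by a self-delimiting block `1…10` in front.
-/

lemma cplx_le_length {M : Machine} {x y : ℕ} {p : BinStr} (h : x ∈ M p y) :
    cplx M x y ≤ p.length :=
  Nat.sInf_le ⟨p, rfl, h⟩

lemma exists_length_eq_cplx {M : Machine} {x y : ℕ} (h : ∃ p, x ∈ M p y) :
    ∃ p : BinStr, p.length = cplx M x y ∧ x ∈ M p y := by
  obtain ⟨p, hp⟩ := h
  exact Nat.sInf_mem (s := {n | ∃ p : BinStr, p.length = n ∧ x ∈ M p y}) ⟨_, p, rfl, hp⟩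

lemma PrefixFreeMachine.of_length_eq {M : Machine} (f : ℕ → ℕ)
    (h : ∀ p y, (M p y).Dom → p.length = f y) : PrefixFreeMachine M :=
  fun y _ _ hpq hp hq => hpq.eq_of_length ((h _ y hp).trans (h _ y hq).symm)

def decodeUnary : List Bool → Option (ℕ × List Bool)
  | [] => none
  | false :: l => some (0, l)
  | true :: l => (decodeUnary l).map fun s => (s.1 + 1, s.2)

@[simp]
lemma decodeUnary_replicate_append (k : ℕ) (l : List Bool) :
    decodeUnary (List.replicate k true ++ false :: l) = some (k, l) := by
  induction k with
  | zero => rfl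
  | succ k ih => simp [List.replicate_succ, decodeUnary, ih]

lemma primrec_decodeUnary : Primrec decodeUnary := by
  have h := Primrec.list_rec (Primrec.id (α := List Bool))
    (Primrec.const (none : Option (ℕ × List Bool)))
    (h := fun (_ : List Bool) (s : Bool × List Bool × Option (ℕ × List Bool)) =>
      cond s.1 (s.2.2.map fun t => (t.1 + 1, t.2)) (some (0, s.2.1)))
    (Primrec.cond (Primrec.fst.comp Primrec.snd)
      (Primrec.option_map (Primrec.snd.comp (Primrec.snd.comp Primrec.snd))
        ((((Primrec.succ.comp Primrec.fst).pair Primrec.snd).comp Primrec.snd).to₂))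
      (Primrec.option_some.comp ((Primrec.const 0).pair
        (Primrec.fst.comp (Primrec.snd.comp Primrec.snd))))).to₂
  refine h.of_eq fun l => ?_
  induction l with
  | nil => rfl
  | cons b l ih => cases b <;> simp [decodeUnary, ← ih]

def preprocess (U : Machine) (g : BinStr → ℕ → Option (BinStr × ℕ)) : Machine :=
  fun p y => (Part.ofOption (g p y)).bind fun w => U w.1 w.2

lemma partrec₂_preprocess {U : Machine} (hU : Partrec₂ U)
    {g : BinStr → ℕ → Option (BinStr × ℕ)} (hg : Computable₂ g) :
    Partrec₂ (preprocess U g) :=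
  (Computable.ofOption hg).bind
    (hU.comp (Computable.fst.comp Computable.snd) (Computable.snd.comp Computable.snd))

lemma mem_preprocess {U : Machine} {g : BinStr → ℕ → Option (BinStr × ℕ)} {p q : BinStr}
    {x y z : ℕ} (hg : g p y = some (q, z)) (h : x ∈ U q z) : x ∈ preprocess U g p y :=
  Part.mem_bind_iff.mpr ⟨(q, z), Part.mem_ofOption.mpr hg, h⟩

lemma dom_preprocess {U : Machine} {g : BinStr → ℕ → Option (BinStr × ℕ)} {p : BinStr}
    {y : ℕ} (h : (preprocess U g p y).Dom) : (g p y).isSome := by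
  obtain ⟨x, hx⟩ := Part.dom_iff_mem.mp h
  obtain ⟨w, hw, -⟩ := Part.mem_bind_iff.mp hx
  exact Option.isSome_iff_exists.mpr ⟨w, Part.mem_ofOption.mp hw⟩

/-- Reads `b :: 1ᵏ0 ++ p` as the program `p` with condition `|p| + 2k + b`. -/
def decodeOffset (p : BinStr) (_ : ℕ) : Option (BinStr × ℕ) :=
  match p with
  | [] => none
  | b :: l => (decodeUnary l).map fun s => (s.2, s.2.length + 2 * s.1 + b.toNat)

lemma computable₂_decodeOffset : Computable₂ decodeOffset := by
  have h : Primrec fun a : BinStr × ℕ =>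
      List.casesOn (motive := fun _ => Option (BinStr × ℕ)) a.1 none fun b l =>
        (decodeUnary l).map fun s => (s.2, s.2.length + 2 * s.1 + cond b 1 0) :=
    Primrec.list_casesOn Primrec.fst (Primrec.const none)
      ((Primrec.option_map (primrec_decodeUnary.comp (Primrec.snd.comp Primrec.snd))
        (((Primrec.snd.comp Primrec.snd).pair
          (Primrec.nat_add.comp (Primrec.nat_add.comp
            (Primrec.list_length.comp (Primrec.snd.comp Primrec.snd))
            (Primrec.nat_mul.comp (Primrec.const 2) (Primrec.fst.comp Primrec.snd)))
          (Primrec.cond (Primrec.fst.comp (Primrec.snd.comp Primrec.fst))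
            (Primrec.const 1) (Primrec.const 0)))).to₂)).to₂)
  refine (h.of_eq (g := fun a : BinStr × ℕ => decodeOffset a.1 a.2) fun a => ?_).to_comp.to₂
  rcases a with ⟨_ | ⟨b, l⟩, y⟩
  · rfl
  · cases b <;> rfl

lemma decodeOffset_eq (p : BinStr) (d y : ℕ) :
    decodeOffset (decide (d % 2 = 1) :: (List.replicate (d / 2) true ++ false :: p)) y =
      some (p, p.length + d) := by
  simp only [decodeOffset, decodeUnary_replicate_append, Option.map_some]
  congr 2
  rw [Nat.add_assoc]
  congr 1
  rcases Nat.mod_two_eq_zero_or_one d with h | h <;> simp [h] <;> omega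

def stripPadding (c : ℕ) (q : BinStr) (y : ℕ) : Option (BinStr × ℕ) :=
  if q.length = y + c then (decodeUnary q).map fun s => (s.2, y) else none

lemma computable₂_stripPadding (c : ℕ) : Computable₂ (stripPadding c) := by
  have h : Primrec fun a : BinStr × ℕ =>
      if a.1.length = a.2 + c then (decodeUnary a.1).map fun s => (s.2, a.2) else none :=
    Primrec.ite (Primrec.eq.comp (Primrec.list_length.comp Primrec.fst)
        (Primrec.nat_add.comp Primrec.snd (Primrec.const c)))
      (Primrec.option_map (primrec_decodeUnary.comp Primrec.fst)
        ((Primrec.snd.comp Primrec.snd).pair (Primrec.snd.comp Primrec.fst)).to₂)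
      (Primrec.const none)
  exact h.to_comp.to₂

lemma prefixFreeMachine_preprocess_stripPadding (U : Machine) (c : ℕ) :
    PrefixFreeMachine (preprocess U (stripPadding c)) := by
  refine PrefixFreeMachine.of_length_eq (· + c) fun p y hp => ?_
  by_contra hne
  simpa [stripPadding, hne] using dom_preprocess hp

namespace IsOptimal

variable {U : Machine}

lemma exists_cplx_le (hU : IsOptimal U) {M : Machine} (hM : Partrec₂ M) :
    ∃ c, ∀ (p : BinStr) (x y : ℕ), x ∈ M p y → cplx U x y ≤ p.length + c := by
  obtain ⟨c, hc⟩ := hU.2 M hM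
  refine ⟨c, fun p x y hp => ?_⟩
  obtain ⟨q, hq_len, hq⟩ := hc p y x hp
  exact (cplx_le_length hq).trans hq_len

lemma exists_mem (hU : IsOptimal U) (x y : ℕ) : ∃ p, x ∈ U p y := by
  have hM : Partrec₂ fun (p : BinStr) (_ : ℕ) => Part.some p.length :=
    (Computable.list_length.comp Computable.fst).partrec
  obtain ⟨_, hc⟩ := hU.2 _ hM
  obtain ⟨q, -, hq⟩ := hc (List.replicate x true) y x (by simp)
  exact ⟨q, hq⟩

lemma exists_cplx_le_cplx_add (hU : IsOptimal U) {M : Machine} (hM : Partrec₂ M) :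
    ∃ c, ∀ x y, (∃ p, x ∈ M p y) → cplx U x y ≤ cplx M x y + c := by
  obtain ⟨c, hc⟩ := hU.exists_cplx_le hM
  refine ⟨c, fun x y hx => ?_⟩
  obtain ⟨p, hp_len, hp⟩ := exists_length_eq_cplx hx
  exact hp_len ▸ hc p x y hp

lemma exists_cplx_le_cplx0_add (hU : IsOptimal U) : ∃ c, ∀ x y, cplx U x y ≤ cplx0 U x + c := by
  have hM : Partrec₂ fun (p : BinStr) (_ : ℕ) => U p 0 :=
    hU.1.comp Computable.fst (Computable.const 0)
  obtain ⟨c, hc⟩ := hU.exists_cplx_le hM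
  refine ⟨c, fun x y => ?_⟩
  obtain ⟨p, hp_len, hp⟩ := exists_length_eq_cplx (hU.exists_mem x 0)
  rw [cplx0, ← hp_len]
  exact hc p x y hp

lemma exists_two_mul_cplx0_le (hU : IsOptimal U) :
    ∃ c, ∀ x n, cplx U x n ≤ n → 2 * cplx0 U x ≤ n + cplx U x n + c := by
  obtain ⟨c, hc⟩ := hU.exists_cplx_le (partrec₂_preprocess hU.1 computable₂_decodeOffset)
  refine ⟨2 * c + 4, fun x n hmn => ?_⟩
  obtain ⟨p, hp_len, hp⟩ := exists_length_eq_cplx (hU.exists_mem x n)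
  set d := n - cplx U x n
  have hp' : x ∈ U p (p.length + d) := by rwa [show p.length + d = n by omega]
  have h := hc _ x 0 (mem_preprocess (decodeOffset_eq p d 0) hp')
  simp only [List.length_cons, List.length_append, List.length_replicate] at h
  rw [cplx0]
  omega

end IsOptimal

lemma IsPrefixOptimal.exists_mem_length_le {V U : Machine} (hV : IsPrefixOptimal V)
    (hU : Partrec₂ U) (a : ℕ) :
    ∃ c, ∀ (p : BinStr) (x y : ℕ), x ∈ U p y → p.length ≤ y + a →
      ∃ q : BinStr, q.length ≤ y + c ∧ x ∈ V q y := by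
  obtain ⟨c, hc⟩ := hV.2.2 _ (partrec₂_preprocess hU (computable₂_stripPadding (a + 1)))
    (prefixFreeMachine_preprocess_stripPadding U (a + 1))
  refine ⟨a + 1 + c, fun p x y hp hp_len => ?_⟩
  have hpad : stripPadding (a + 1) (List.replicate (y + a - p.length) true ++ false :: p) y =
      some (p, y) := by
    simp only [stripPadding, List.length_append, List.length_replicate, List.length_cons,
      decodeUnary_replicate_append, Option.map_some]
    rw [if_pos (by omega)]
  obtain ⟨q, hq_len, hq⟩ := hc _ y x (mem_preprocess hpad hp)
  simp only [List.length_append, List.length_replicate, List.length_cons] at hq_len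
  exact ⟨q, by omega, hq⟩

/-- `C(u | C(u)) = K(u | C(u)) + O(1)`. -/
theorem plain_eq_prefix_on_plain_condition (U V : Machine)
    (hU : IsOptimal U) (hV : IsPrefixOptimal V) :
    ∃ c : ℕ, ∀ u : BinStr,
      |(cplx U (enc u) (cplx0 U (enc u)) : ℤ) - (cplx V (enc u) (cplx0 U (enc u)) : ℤ)|
        ≤ (c : ℤ) := by
  obtain ⟨c₁, hC_le_K⟩ := hU.exists_cplx_le_cplx_add hV.1
  obtain ⟨c₂, hC_le_C0⟩ := hU.exists_cplx_le_cplx0_add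
  obtain ⟨c₃, hC0_le⟩ := hU.exists_two_mul_cplx0_le
  obtain ⟨c₄, hK_le⟩ := hV.exists_mem_length_le hU.1 c₂
  refine ⟨c₁ + c₃ + c₄, fun u => ?_⟩
  set x := enc u
  set n := cplx0 U x
  obtain ⟨p, hp_len, hp⟩ := exists_length_eq_cplx (hU.exists_mem x n)
  obtain ⟨q, hq_len, hq⟩ := hK_le p x n hp (hp_len ▸ hC_le_C0 x n)
  have hK : cplx V x n ≤ n + c₄ := (cplx_le_length hq).trans hq_len
  have hC_le : cplx U x n ≤ cplx V x n + c₁ := hC_le_K x n ⟨q, hq⟩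
  have hC0 : cplx U x n ≤ n → 2 * n ≤ n + cplx U x n + c₃ := hC0_le x n
  rw [abs_sub_le_iff]
  constructor <;> push_cast <;> omega
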